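/- arXiv:2005.09716 — 2 statements merged into one kernel-verified Lean document; each statement's English description precedes it below -/
import Mathlib

section
/- Let X be a graph with symmetric subexponential growth. Then for every a, b > 0 there exists m ∈ ℕ such that β_x(r) ≤ a·e^{b·r} for all x ∈ X and all r ≥ m. -/
open Filter Real

private lemma walk_getVert_dist {V : Type*} {G : SimpleGraph V} (hconn : G.Connected)
    {u v : V} (p : G.Walk u v) (n : ℕ) :
    G.dist u (p.getVert n) ≤ n ∧ G.dist (p.getVert n) v ≤ p.length - n := by
  induction p generalizing n with
  | nil => simp [SimpleGraph.Walk.getVert, SimpleGraph.dist_self]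
  | @cons u b v h q ih =>
    cases n with
    | zero =>
      refine ⟨by simp [SimpleGraph.dist_self], ?_⟩
      simpa using SimpleGraph.dist_le (SimpleGraph.Walk.cons h q)
    | succ n =>
      rw [SimpleGraph.Walk.getVert_cons_succ]
      constructor
      · calc G.dist u (q.getVert n) ≤ G.dist u b + G.dist b (q.getVert n) :=
              hconn.dist_triangle
          _ ≤ 1 + n := by
              have h1 : G.dist u b ≤ 1 := by
                simpa using SimpleGraph.dist_le h.toWalk
              exact Nat.add_le_add h1 (ih n).1
          _ = n + 1 := by omega
      · have := (ih n).2
        simp only [SimpleGraph.Walk.length_cons]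
        omega

private lemma ball_finite {V : Type*} {G : SimpleGraph V} (hconn : G.Connected)
    (hlf : G.LocallyFinite) (x : V) (r : ℕ) : {z : V | G.dist x z ≤ r}.Finite := by
  induction r with
  | zero =>
    refine (Set.finite_singleton x).subset ?_
    intro z hz
    have : G.dist x z = 0 := Nat.le_zero.mp hz
    simp [((hconn.dist_eq_zero_iff).mp this).symm]
  | succ r ih =>
    have hnb : ∀ w : V, (G.neighborSet w).Finite := fun w => by
      haveI := hlf w; exact (G.neighborSet w).toFinite
    refine (ih.union (Set.Finite.biUnion ih (fun w _ => hnb w))).subset ?_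
    intro z hz
    by_cases hzr : G.dist x z ≤ r
    · exact Or.inl hzr
    · have hd : G.dist x z = r + 1 := by
        have : G.dist x z ≤ r + 1 := hz
        omega
      obtain ⟨p, hp⟩ := hconn.exists_walk_length_eq_dist x z
      right
      refine Set.mem_biUnion (s := {z : V | G.dist x z ≤ r}) (t := fun w => G.neighborSet w)
        (x := p.getVert r) ?_ ?_
      · exact (walk_getVert_dist hconn p r).1
      · have hrl : r < p.length := by omega
        have hadj := p.adj_getVert_succ hrl
        have hlast : p.getVert (r + 1) = z := by
          have : r + 1 = p.length := by omega
          rw [this, SimpleGraph.Walk.getVert_length]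
        rwa [hlast] at hadj

private lemma dist_split {V : Type*} {G : SimpleGraph V} (hconn : G.Connected)
    {x z : V} {r1 r2 : ℕ} (h : G.dist x z ≤ r1 + r2) :
    ∃ w : V, G.dist x w ≤ r1 ∧ G.dist w z ≤ r2 := by
  obtain ⟨p, hp⟩ := hconn.exists_walk_length_eq_dist x z
  obtain ⟨h1, h2⟩ := walk_getVert_dist hconn p r1
  exact ⟨p.getVert r1, h1, by omega⟩

private lemma ball_submul {V : Type*} {G : SimpleGraph V} (hconn : G.Connected)
    (hlf : G.LocallyFinite) (x : V) (r1 r2 C : ℕ)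
    (hC : ∀ w : V, {z : V | G.dist w z ≤ r2}.ncard ≤ C) :
    {z : V | G.dist x z ≤ r1 + r2}.ncard ≤ {z : V | G.dist x z ≤ r1}.ncard * C := by
  classical
  set s1 := (ball_finite hconn hlf x r1).toFinset with hs1
  have hsubset : {z : V | G.dist x z ≤ r1 + r2} ⊆
      ↑(s1.biUnion fun w => (ball_finite hconn hlf w r2).toFinset) := by
    intro z hz
    obtain ⟨w, hw1, hw2⟩ := dist_split hconn hz
    simp only [Finset.coe_biUnion, Set.mem_iUnion, Finset.mem_coe, Set.Finite.mem_toFinset,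
      Set.mem_setOf_eq, hs1]
    exact ⟨w, hw1, hw2⟩
  calc {z : V | G.dist x z ≤ r1 + r2}.ncard
      ≤ (↑(s1.biUnion fun w => (ball_finite hconn hlf w r2).toFinset) : Set V).ncard :=
        Set.ncard_le_ncard hsubset (Finset.finite_toSet _)
    _ = (s1.biUnion fun w => (ball_finite hconn hlf w r2).toFinset).card :=
        Set.ncard_coe_finset _
    _ ≤ ∑ w ∈ s1, ((ball_finite hconn hlf w r2).toFinset).card := Finset.card_biUnion_le
    _ ≤ ∑ _w ∈ s1, C := by
        refine Finset.sum_le_sum fun w _ => ?_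
        rw [← Set.ncard_eq_toFinset_card _ (ball_finite hconn hlf w r2)]
        exact hC w
    _ = s1.card * C := by rw [Finset.sum_const, smul_eq_mul]
    _ = {z : V | G.dist x z ≤ r1}.ncard * C := by
        rw [hs1, ← Set.ncard_eq_toFinset_card _ (ball_finite hconn hlf x r1)]

set_option maxHeartbeats 2000000 in
/-- If a connected locally finite graph has symmetric subexponential growth, then for
all `a, b > 0` there is `m` with `β_x(r) ≤ a * e^(b r)` for all `x` and `r ≥ m`. -/
theorem stmt_7 {V : Type*} (G : SimpleGraph V) (hconn : G.Connected)
    (hlf : G.LocallyFinite)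
    (hsym : ∃ k l m : ℕ, ∀ x y : V, ∀ r : ℕ, m ≤ r →
      {z : V | G.dist x z ≤ r}.ncard ≤ k * {z : V | G.dist y z ≤ l * r}.ncard)
    (hsub : ∃ x : V, Filter.liminf
      (fun r : ℕ => Real.log ({z : V | G.dist x z ≤ r}.ncard) / r) Filter.atTop = 0) :
    ∀ a b : ℝ, 0 < a → 0 < b → ∃ m : ℕ, ∀ x : V, ∀ r : ℕ, m ≤ r →
      ({z : V | G.dist x z ≤ r}.ncard : ℝ) ≤ a * Real.exp (b * r) := by
  obtain ⟨k, l, m0, hsym⟩ := hsym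
  obtain ⟨x0, hlim⟩ := hsub
  intro a b ha hb
  set β : V → ℕ → ℕ := fun x r => {z : V | G.dist x z ≤ r}.ncard with hβ
  set f : ℕ → ℕ := fun r => β x0 r with hf
  set L : ℕ := l + 1 with hL
  -- basic facts
  have hmono : ∀ x : V, ∀ {r r' : ℕ}, r ≤ r' → β x r ≤ β x r' := by
    intro x r r' hrr
    exact Set.ncard_le_ncard (fun z hz => le_trans hz hrr) (ball_finite hconn hlf x r')
  have hone : ∀ x : V, ∀ r : ℕ, 1 ≤ β x r := by
    intro x r
    have : 0 < β x r := by
      rw [hβ]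
      exact (Set.ncard_pos (ball_finite hconn hlf x r)).mpr ⟨x, by simp [SimpleGraph.dist_self]⟩
    omega
  have hsymL : ∀ x : V, ∀ r : ℕ, m0 ≤ r → β x r ≤ k * f (L * r) := by
    intro x r hr
    refine (hsym x x0 r hr).trans (Nat.mul_le_mul_left k ?_)
    exact hmono x0 (Nat.mul_le_mul_right r (Nat.le_succ l))
  have hk : 1 ≤ k := by
    rcases Nat.eq_zero_or_pos k with hk0 | hk0
    · exfalso
      have := hsymL x0 m0 le_rfl
      have h1 := hone x0 m0
      rw [hk0] at this
      omega
    · exact hk0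
  have hfpos : ∀ r : ℕ, (0 : ℝ) < (f r : ℝ) := fun r => by
    exact_mod_cast Nat.lt_of_lt_of_le Nat.zero_lt_one (hone x0 r)
  -- iteration
  have hiter : ∀ s : ℕ, m0 ≤ s → ∀ q t : ℕ, f (t + q * s) ≤ f t * (k * f (L * s)) ^ q := by
    intro s hs q
    induction q with
    | zero => simp
    | succ q ih =>
      intro t
      have h1 : t + (q + 1) * s = (t + q * s) + s := by ring
      rw [h1, pow_succ]
      calc f ((t + q * s) + s) ≤ f (t + q * s) * (k * f (L * s)) :=
            ball_submul hconn hlf x0 (t + q * s) s (k * f (L * s))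
              (fun w => hsymL w s hs)
        _ ≤ (f t * (k * f (L * s)) ^ q) * (k * f (L * s)) :=
            Nat.mul_le_mul_right _ (ih t)
        _ = f t * ((k * f (L * s)) ^ q * (k * f (L * s))) := by ring
  have hc1 : ∀ s : ℕ, 1 ≤ k * f (L * s) := fun s =>
    Nat.mul_pos hk (hone x0 (L * s))
  have hstep : ∀ s : ℕ, m0 ≤ s → 0 < s → ∀ r : ℕ, m0 ≤ r →
      ∃ q : ℕ, q * s ≤ r ∧ f r ≤ f (m0 + s) * (k * f (L * s)) ^ q := by
    intro s hms hspos r hr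
    refine ⟨(r - m0) / s, ?_, ?_⟩
    · have := Nat.div_mul_le_self (r - m0) s
      omega
    · have hmod : (r - m0) % s < s := Nat.mod_lt _ hspos
      have hdm := Nat.div_add_mod (r - m0) s
      have hds : ((r - m0) / s) * s = s * ((r - m0) / s) := Nat.mul_comm _ _
      have hr' : r = (m0 + (r - m0) % s) + ((r - m0) / s) * s := by omega
      calc f r = f ((m0 + (r - m0) % s) + ((r - m0) / s) * s) := by rw [← hr']
        _ ≤ f (m0 + (r - m0) % s) * (k * f (L * s)) ^ ((r - m0) / s) :=
            hiter s hms _ _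
        _ ≤ f (m0 + s) * (k * f (L * s)) ^ ((r - m0) / s) :=
            Nat.mul_le_mul_right _ (hmono x0 (by omega))
  -- the liminf function
  set g : ℕ → ℝ := fun r => Real.log ({z : V | G.dist x0 z ≤ r}.ncard) / r with hg
  have hgf : ∀ r : ℕ, g r = Real.log (f r) / r := fun r => rfl
  -- coboundedness
  have hb0 : ∃ b0 : ℝ, ∀ᶠ r in atTop, g r ≤ b0 := by
    set s1 : ℕ := m0 + 1 with hs1
    set c1 : ℕ := k * f (L * s1) with hc1def
    refine ⟨Real.log (f (m0 + s1)) + Real.log c1, ?_⟩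
    filter_upwards [eventually_ge_atTop (m0 + 1)] with r hr
    obtain ⟨q, hqs, hfr⟩ := hstep s1 (by omega) (by omega) r (by omega)
    have hq : q ≤ r := by
      have := hc1 s1
      nlinarith [hqs]
    have hfr2 : f r ≤ f (m0 + s1) * c1 ^ r :=
      hfr.trans (Nat.mul_le_mul_left _ (Nat.pow_le_pow_right (hc1 s1) hq))
    have hlog : Real.log (f r) ≤ Real.log (f (m0 + s1)) + r * Real.log c1 := by
      calc Real.log (f r) ≤ Real.log ((f (m0 + s1) * c1 ^ r : ℕ) : ℝ) := by
            apply Real.log_le_log (hfpos r)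
            exact_mod_cast hfr2
        _ = Real.log (f (m0 + s1)) + r * Real.log c1 := by
            have hc1R : (0 : ℝ) < ((c1 : ℕ) : ℝ) := by exact_mod_cast hc1 s1
            push_cast
            rw [Real.log_mul (ne_of_gt (hfpos (m0 + s1))) (pow_ne_zero r hc1R.ne'), Real.log_pow]
      -- note: c1 > 0 cast
    have hrpos : (1 : ℝ) ≤ (r : ℝ) := by exact_mod_cast Nat.one_le_iff_ne_zero.mpr (by omega)
    rw [hgf]
    rw [div_le_iff₀ (by linarith)]
    have hlogA : 0 ≤ Real.log (f (m0 + s1)) := Real.log_nonneg (by exact_mod_cast hone x0 _)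
    have hlogc : 0 ≤ Real.log c1 := Real.log_nonneg (by exact_mod_cast hc1 s1)
    nlinarith [hlog]
  obtain ⟨b0, hb0⟩ := hb0
  have hcob : Filter.IsCoboundedUnder (· ≥ ·) Filter.atTop g :=
    Filter.IsBoundedUnder.isCoboundedUnder_ge ⟨b0, by exact Filter.eventually_map.2 hb0⟩
  -- good radii
  have hgood : ∀ ε : ℝ, 0 < ε → ∀ N : ℕ, ∃ u : ℕ, N ≤ u ∧ (f u : ℝ) ≤ Real.exp (ε * u) := by
    intro ε hε N
    have hfr : ∃ᶠ r in atTop, g r < ε :=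
      Filter.frequently_lt_of_liminf_lt hcob (by rw [hlim]; exact hε)
    obtain ⟨u, hu1, hu2⟩ := (hfr.and_eventually (eventually_ge_atTop (max N 1))).exists
    refine ⟨u, le_trans (le_max_left _ _) hu2, ?_⟩
    have hupos : (0 : ℝ) < (u : ℝ) := by
      have : 1 ≤ u := le_trans (le_max_right _ _) hu2
      exact_mod_cast this
    rw [hgf] at hu1
    have hlt : Real.log (f u) < ε * u := by
      have := (div_lt_iff₀ hupos).mp hu1
      linarith
    calc (f u : ℝ) = Real.exp (Real.log (f u)) := (Real.exp_log (hfpos u)).symm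
      _ ≤ Real.exp (ε * u) := Real.exp_le_exp.mpr hlt.le
  -- key lemma
  have hkey : ∀ ε : ℝ, 0 < ε → ∃ M : ℕ, ∀ r : ℕ, M ≤ r → (f r : ℝ) ≤ Real.exp (ε * r) := by
    intro ε hε
    have hLpos : 0 < L := by omega
    have hLR : (1 : ℝ) ≤ (L : ℝ) := by exact_mod_cast hLpos
    set δ : ℝ := ε / (8 * L) with hδ
    have hδpos : 0 < δ := by positivity
    obtain ⟨s0', hs0'⟩ := exists_nat_ge (4 * Real.log k / ε)
    set s0 : ℕ := max s0' (m0 + 1) with hs0def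
    obtain ⟨u, hu1, hu2⟩ := hgood δ hδpos (L * s0)
    set s : ℕ := u / L with hsdef
    have hsL : L * s ≤ u := by
      rw [hsdef, mul_comm]
      exact Nat.div_mul_le_self u L
    have hs_ge : s0 ≤ s := by
      rw [hsdef]
      exact Nat.le_div_iff_mul_le hLpos |>.mpr (by rw [mul_comm] at hu1; omega)
    have hspos : 0 < s := by omega
    have hm0s : m0 ≤ s := by omega
    have hu_lt : u < L * (s + 1) := by
      have h1 : u / L < s + 1 := by rw [← hsdef]; exact Nat.lt_succ_self s
      have h2 := (Nat.div_lt_iff_lt_mul hLpos).mp h1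
      exact lt_of_lt_of_le h2 (le_of_eq (Nat.mul_comm _ _))
    -- bound on log f(L*s)
    have hfls : Real.log (f (L * s)) ≤ ε / 4 * s := by
      have h1 : (f (L * s) : ℝ) ≤ Real.exp (δ * (L * (s + 1))) := by
        refine le_trans ?_ (hu2.trans ?_)
        · exact_mod_cast hmono x0 hsL
        · apply Real.exp_le_exp.mpr
          have : (u : ℝ) ≤ (L : ℝ) * (s + 1) := by exact_mod_cast hu_lt.le
          nlinarith
      have h2 : Real.log (f (L * s)) ≤ δ * (L * (s + 1)) := by
        calc Real.log (f (L * s)) ≤ Real.log (Real.exp (δ * (L * (s + 1)))) :=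
              Real.log_le_log (hfpos _) h1
          _ = δ * (L * (s + 1)) := Real.log_exp _
      have h3 : δ * (L : ℝ) = ε / 8 := by
        rw [hδ]; field_simp; try ring
      have hsR : (1 : ℝ) ≤ (s : ℝ) := by exact_mod_cast hspos
      calc Real.log (f (L * s)) ≤ δ * (L * (s + 1)) := h2
        _ = (δ * L) * (s + 1) := by ring
        _ = ε / 8 * (s + 1) := by rw [h3]
        _ ≤ ε / 8 * (2 * s) := by nlinarith
        _ = ε / 4 * s := by ring
    -- bound on log k
    have hlogk : Real.log k ≤ ε / 4 * s := by
      have h1 : 4 * Real.log k / ε ≤ (s : ℝ) := by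
        refine hs0'.trans ?_
        exact_mod_cast le_trans (le_max_left s0' (m0+1)) hs_ge
      have hlogk0 : 0 ≤ Real.log k := Real.log_nonneg (by exact_mod_cast hk)
      rw [div_le_iff₀ hε] at h1
      nlinarith
    obtain ⟨M2, hM2⟩ := exists_nat_ge (4 * Real.log (f (m0 + s)) / ε)
    refine ⟨max M2 (m0 + 1), ?_⟩
    intro r hr
    have hrM2 : M2 ≤ r := le_trans (le_max_left _ _) hr
    have hrm0 : m0 + 1 ≤ r := le_trans (le_max_right _ _) hr
    obtain ⟨q, hqs, hfr⟩ := hstep s hm0s hspos r (by omega)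
    have hc := hc1 s
    have hlog : Real.log (f r) ≤
        Real.log (f (m0 + s)) + q * (Real.log k + Real.log (f (L * s))) := by
      calc Real.log (f r) ≤ Real.log ((f (m0 + s) * (k * f (L * s)) ^ q : ℕ) : ℝ) := by
            apply Real.log_le_log (hfpos r)
            exact_mod_cast hfr
        _ = Real.log (f (m0 + s)) + q * (Real.log k + Real.log (f (L * s))) := by
            have hkR : (0 : ℝ) < (k : ℝ) := by exact_mod_cast hk
            have hcR : (0 : ℝ) < (k : ℝ) * (f (L * s) : ℝ) := mul_pos hkR (hfpos (L * s))
            push_cast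
            rw [Real.log_mul (ne_of_gt (hfpos (m0 + s))) (pow_ne_zero q hcR.ne'), Real.log_pow,
              Real.log_mul hkR.ne' (ne_of_gt (hfpos (L * s)))]
    have hA : Real.log (f (m0 + s)) ≤ ε / 4 * r := by
      have h1 : 4 * Real.log (f (m0 + s)) / ε ≤ (r : ℝ) := hM2.trans (by exact_mod_cast hrM2)
      rw [div_le_iff₀ hε] at h1
      nlinarith
    have hqr : (q : ℝ) * s ≤ (r : ℝ) := by exact_mod_cast hqs
    have hmid : (q : ℝ) * (Real.log k + Real.log (f (L * s))) ≤ ε / 2 * r := by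
      have hq0 : (0 : ℝ) ≤ q := Nat.cast_nonneg q
      have hs0R : (0 : ℝ) < s := by exact_mod_cast hspos
      have h1 : Real.log k + Real.log (f (L * s)) ≤ ε / 2 * s := by linarith
      have hlogk0 : 0 ≤ Real.log k := Real.log_nonneg (by exact_mod_cast hk)
      have hlogf0 : 0 ≤ Real.log (f (L * s)) := Real.log_nonneg (by exact_mod_cast hone x0 _)
      calc (q : ℝ) * (Real.log k + Real.log (f (L * s))) ≤ (q : ℝ) * (ε / 2 * s) := by
            nlinarith
        _ = ε / 2 * ((q : ℝ) * s) := by ring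
        _ ≤ ε / 2 * r := by nlinarith
    have hr0 : (0 : ℝ) ≤ (r : ℝ) := Nat.cast_nonneg r
    have htotal : Real.log (f r) ≤ ε * r := by nlinarith
    calc (f r : ℝ) = Real.exp (Real.log (f r)) := (Real.exp_log (hfpos r)).symm
      _ ≤ Real.exp (ε * r) := Real.exp_le_exp.mpr htotal
  -- conclusion
  have hLpos : 0 < L := by omega
  have hLR : (0 : ℝ) < (L : ℝ) := by exact_mod_cast hLpos
  obtain ⟨M, hM⟩ := hkey (b / (2 * L)) (by positivity)
  obtain ⟨m1, hm1⟩ := exists_nat_ge (2 * k / (a * b))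
  refine ⟨max (max M m0) (m1 + 1), ?_⟩
  intro x r hr
  have hrM : M ≤ r := le_trans (le_trans (le_max_left _ _) (le_max_left _ _)) hr
  have hrm0 : m0 ≤ r := le_trans (le_trans (le_max_right _ _) (le_max_left _ _)) hr
  have hrm1 : m1 + 1 ≤ r := le_trans (le_max_right _ _) hr
  have h1 : β x r ≤ k * f (L * r) := hsymL x r hrm0
  have h2 : (f (L * r) : ℝ) ≤ Real.exp (b / (2 * L) * (L * r : ℕ)) := by
    apply hM
    calc M ≤ r := hrM
      _ ≤ L * r := Nat.le_mul_of_pos_left r hLpos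
  have h3 : b / (2 * L) * ((L * r : ℕ) : ℝ) = b * r / 2 := by
    push_cast
    field_simp
  rw [h3] at h2
  have h4 : (β x r : ℝ) ≤ (k : ℝ) * Real.exp (b * r / 2) := by
    calc (β x r : ℝ) ≤ ((k * f (L * r) : ℕ) : ℝ) := by exact_mod_cast h1
      _ = (k : ℝ) * (f (L * r) : ℝ) := by push_cast; ring
      _ ≤ (k : ℝ) * Real.exp (b * r / 2) := by
          have : (0 : ℝ) ≤ (k : ℝ) := Nat.cast_nonneg k
          nlinarith [hfpos (L * r)]
  have h5 : (k : ℝ) ≤ a * Real.exp (b * r / 2) := by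
    have hrm1R : (m1 : ℝ) + 1 ≤ (r : ℝ) := by exact_mod_cast hrm1
    have hexp := Real.add_one_le_exp (b * r / 2)
    have hm1' : 2 * (k : ℝ) ≤ m1 * (a * b) := by
      rw [div_le_iff₀ (by positivity)] at hm1
      linarith
    nlinarith [Real.exp_pos (b * r / 2), (Nat.cast_nonneg k : (0:ℝ) ≤ (k:ℝ)),
      mul_le_mul_of_nonneg_left hexp ha.le,
      mul_le_mul_of_nonneg_left hrm1R (mul_pos ha hb).le]
  have h6 : Real.exp (b * r) = Real.exp (b * r / 2) * Real.exp (b * r / 2) := by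
    rw [← Real.exp_add]; ring_nf
  calc ({z : V | G.dist x z ≤ r}.ncard : ℝ) = (β x r : ℝ) := rfl
    _ ≤ (k : ℝ) * Real.exp (b * r / 2) := h4
    _ ≤ (a * Real.exp (b * r / 2)) * Real.exp (b * r / 2) := by
        nlinarith [Real.exp_pos (b * r / 2)]
    _ = a * Real.exp (b * r) := by rw [h6]; ring
end

section
/- Let X be a connected graph with finite maximum degree such that there is an increasing sequence (r_n) with β_x(r_n) ≥ 2^{√(r_n)/4} for all n ∈ ℕ and all x ∈ X. Then for every ε > 0 there exists R ∈ ℕ such that ε·β_x(r) > r for all r ≥ R and all x ∈ X. -/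
/-!
Balls of radius `s` centred at the points at distance `0, 2s+1, 2(2s+1), …` from `x` along a
geodesic are pairwise disjoint and lie in the ball of radius `r` about `x`, so
`β_x(r) (2s+1) ≥ (r - s + 1) min_y β_y(s)`: a uniform lower bound at a single radius `s`
propagates to linear growth with slope about `min_y β_y(s) / (2s+1)`. Taking `s = r_n` with
`2^{√s/4} ≫ s/ε` makes this slope exceed `1/ε`. The same growth bound forces the graph to be
infinite, which is what provides geodesics of every length.
-/

open Filter Function

namespace SimpleGraph

variable {V : Type*} {G : SimpleGraph V}

lemma Walk.dist_getVert_le {u v : V} (p : G.Walk u v) (n : ℕ) : G.dist u (p.getVert n) ≤ n :=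
  (dist_le (p.take n)).trans (by simp [Walk.take_length])

lemma Connected.dist_getVert_of_length_eq_dist (hconn : G.Connected) {u v : V} (p : G.Walk u v)
    (hp : p.length = G.dist u v) {n : ℕ} (hn : n ≤ p.length) : G.dist u (p.getVert n) = n := by
  have htake := dist_le (p.take n)
  have hdrop := dist_le (p.drop n)
  have := hconn.dist_triangle (u := u) (v := p.getVert n) (w := v)
  rw [Walk.take_length] at htake
  rw [Walk.drop_length] at hdrop
  omega

lemma setOf_dist_le_succ_subset (x : V) (r : ℕ) :
    {z | G.dist x z ≤ r + 1} ⊆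
      {z | G.dist x z ≤ r} ∪ ⋃ y ∈ {z | G.dist x z ≤ r}, G.neighborSet y := by
  intro z hz
  rcases Nat.lt_or_ge r (G.dist x z) with hr | hr
  · obtain ⟨p, hp⟩ := exists_walk_of_dist_ne_zero (by omega : G.dist x z ≠ 0)
    have hlen : p.length = r + 1 := hp.trans (le_antisymm hz hr)
    refine Or.inr (Set.mem_biUnion (p.dist_getVert_le r) ?_)
    simpa [p.getVert_of_length_le hlen.le] using p.adj_getVert_succ (i := r) (by omega)
  · exact Or.inl hr

lemma Connected.finite_setOf_dist_le [G.LocallyFinite] (hconn : G.Connected) (x : V) (r : ℕ) :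
    {z | G.dist x z ≤ r}.Finite := by
  induction r with
  | zero =>
    refine (Set.finite_singleton x).subset fun z hz => ?_
    exact (hconn.dist_eq_zero_iff.mp (Nat.le_zero.mp hz)).symm
  | succ r ih =>
    exact (ih.union (ih.biUnion fun y _ => (G.neighborSet y).toFinite)).subset
      (setOf_dist_le_succ_subset x r)

lemma Connected.mul_le_ncard_setOf_dist_le_of_dist_eq [G.LocallyFinite] (hconn : G.Connected)
    {x : V} {B s m r : ℕ} (hB : ∀ y, B ≤ {z | G.dist y z ≤ s}.ncard) (c : Fin (m + 1) → V)
    (hc : ∀ i, G.dist x (c i) = i * (2 * s + 1)) (hr : m * (2 * s + 1) + s ≤ r) :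
    (m + 1) * B ≤ {z | G.dist x z ≤ r}.ncard := by
  set S : Fin (m + 1) → Set V := fun i => {z | G.dist (c i) z ≤ s}
  have hsub : ∀ i, S i ⊆ {z | G.dist x z ≤ r} := by
    intro i w (hw : G.dist (c i) w ≤ s)
    have htri := hconn.dist_triangle (u := x) (v := c i) (w := w)
    have hi := Nat.mul_le_mul_right (2 * s + 1) (Nat.lt_succ_iff.mp i.isLt)
    rw [hc] at htri
    change G.dist x w ≤ r
    omega
  have hdisj : Pairwise (Disjoint on S) := by
    intro i j hij
    wlog hlt : i < j generalizing i j
    · exact (this hij.symm (lt_of_le_of_ne (not_lt.mp hlt) hij.symm)).symm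
    refine Set.disjoint_left.mpr
      fun w (hwi : G.dist (c i) w ≤ s) (hwj : G.dist (c j) w ≤ s) => ?_
    have htri₁ := hconn.dist_triangle (u := x) (v := c i) (w := w)
    have htri₂ := hconn.dist_triangle (u := x) (v := w) (w := c j)
    have hij := Nat.mul_le_mul_right (2 * s + 1) (Nat.succ_le_of_lt (Fin.lt_def.mp hlt))
    rw [hc] at htri₁ htri₂
    rw [dist_comm] at hwj
    rw [Nat.succ_mul] at hij
    omega
  calc (m + 1) * B = ∑ _i : Fin (m + 1), B := by simp
    _ ≤ ∑ i, (S i).ncard := Finset.sum_le_sum fun i _ => hB (c i)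
    _ = (⋃ i, S i).ncard := by
      rw [Set.ncard_iUnion_of_finite (fun i => hconn.finite_setOf_dist_le _ _) hdisj,
        finsum_eq_sum_of_fintype]
    _ ≤ _ := Set.ncard_le_ncard (Set.iUnion_subset hsub) (hconn.finite_setOf_dist_le x r)

theorem Connected.mul_le_ncard_setOf_dist_le_mul [G.LocallyFinite] [Infinite V]
    (hconn : G.Connected) {B s r : ℕ} (hB : ∀ y, B ≤ {z | G.dist y z ≤ s}.ncard) (hsr : s ≤ r)
    (x : V) : B * (r - s + 1) ≤ {z | G.dist x z ≤ r}.ncard * (2 * s + 1) := by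
  set m := (r - s) / (2 * s + 1)
  obtain ⟨z, hz⟩ := (hconn.finite_setOf_dist_le x r).infinite_compl.nonempty
  obtain ⟨p, hp⟩ := hconn.exists_walk_length_eq_dist x z
  have hm : m * (2 * s + 1) + s ≤ r := by
    have : m * (2 * s + 1) ≤ r - s := Nat.div_mul_le_self _ _
    omega
  have hcentre (i : Fin (m + 1)) : i * (2 * s + 1) ≤ p.length := by
    have := Nat.mul_le_mul_right (2 * s + 1) (Nat.lt_succ_iff.mp i.isLt)
    have : r < G.dist x z := not_le.mp hz
    omega
  have hpack := hconn.mul_le_ncard_setOf_dist_le_of_dist_eq hB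
    (fun i => p.getVert (i * (2 * s + 1)))
    (fun i => hconn.dist_getVert_of_length_eq_dist p hp (hcentre i)) hm
  calc B * (r - s + 1) ≤ B * ((2 * s + 1) * (m + 1)) :=
        Nat.mul_le_mul_left _ (Nat.lt_mul_div_succ _ (by omega))
    _ = (m + 1) * B * (2 * s + 1) := by ring
    _ ≤ _ := Nat.mul_le_mul_right _ hpack

theorem Connected.lt_mul_ncard_setOf_dist_le [G.LocallyFinite] [Infinite V]
    (hconn : G.Connected) {B s r : ℕ} {ε : ℝ} (hB : ∀ y, B ≤ {z | G.dist y z ≤ s}.ncard)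
    (hεB : 2 * (2 * s + 1) ≤ ε * B) (hr : 2 * s ≤ r) (x : V) :
    (r : ℝ) < ε * {z | G.dist x z ≤ r}.ncard := by
  have hlin : (B : ℝ) * (r - s + 1) ≤ {z | G.dist x z ≤ r}.ncard * (2 * s + 1) := by
    have hsr : s ≤ r := by omega
    have h := Nat.cast_le (α := ℝ).mpr (hconn.mul_le_ncard_setOf_dist_le_mul hB hsr x)
    rw [Nat.cast_mul, Nat.cast_mul, Nat.cast_add, Nat.cast_sub hsr] at h
    exact_mod_cast h
  have hε : 0 ≤ ε := by nlinarith [(Nat.cast_nonneg B : (0 : ℝ) ≤ B)]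
  have hr' : (2 * s : ℝ) ≤ r := by exact_mod_cast hr
  refine lt_of_lt_of_le (b := 2 * ((r : ℝ) - s + 1)) (by linarith)
    (le_of_mul_le_mul_left ?_ (by positivity : (0 : ℝ) < 2 * s + 1))
  calc (2 * s + 1) * (2 * ((r : ℝ) - s + 1)) = 2 * (2 * s + 1) * (r - s + 1) := by ring
    _ ≤ ε * B * (r - s + 1) := by gcongr; linarith
    _ ≤ ε * ({z | G.dist x z ≤ r}.ncard * (2 * s + 1)) := by rw [mul_assoc]; gcongr
    _ = (2 * s + 1) * (ε * {z | G.dist x z ≤ r}.ncard) := by ring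

end SimpleGraph

lemma tendsto_two_rpow_sqrt_div_four_div_atTop :
    Tendsto (fun t : ℝ => 2 ^ (√t / 4) / t) atTop atTop := by
  refine ((tendsto_exp_mul_div_rpow_atTop 2 (Real.log 2 / 4) (by positivity)).comp
    Real.tendsto_sqrt_atTop).congr' ?_
  filter_upwards [eventually_ge_atTop 0] with t ht
  rw [Function.comp_apply, Real.rpow_two, Real.sq_sqrt ht, Real.rpow_def_of_pos two_pos]
  ring_nf

lemma StrictMono.exists_mul_le_two_rpow_sqrt_div_four {r : ℕ → ℕ} (hr : StrictMono r) (C : ℝ) :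
    ∃ n, 1 ≤ r n ∧ C * r n ≤ 2 ^ (√(r n) / 4) := by
  have h := tendsto_two_rpow_sqrt_div_four_div_atTop.comp
    (tendsto_natCast_atTop_atTop.comp hr.tendsto_atTop)
  obtain ⟨n, hC, h1⟩ :=
    ((h.eventually_ge_atTop C).and (hr.tendsto_atTop.eventually_ge_atTop 1)).exists
  have : (0 : ℝ) < r n := by exact_mod_cast h1
  exact ⟨n, h1, (le_div_iff₀ this).mp hC⟩

lemma SimpleGraph.Connected.infinite_of_two_rpow_sqrt_le_ncard {V : Type*} {G : SimpleGraph V}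
    (hconn : G.Connected) {rseq : ℕ → ℕ} (hmono : StrictMono rseq)
    (hlow : ∀ n x, (2 : ℝ) ^ (√(rseq n) / 4) ≤ {z | G.dist x z ≤ rseq n}.ncard) :
    Infinite V := by
  refine not_finite_iff_infinite.mp fun _ => ?_
  obtain ⟨n, hn, hC⟩ := hmono.exists_mul_le_two_rpow_sqrt_div_four (Nat.card V + 1)
  have hcard := (hlow n hconn.nonempty.some).trans (Nat.cast_le.mpr (Set.ncard_le_card _))
  have : (1 : ℝ) ≤ rseq n := by exact_mod_cast hn
  nlinarith

theorem stmt_8_general {V : Type*} (G : SimpleGraph V) (hconn : G.Connected)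
    (hlf : G.LocallyFinite)
    (rseq : ℕ → ℕ) (hmono : StrictMono rseq)
    (hlow : ∀ n : ℕ, ∀ x : V,
      (2 : ℝ) ^ (Real.sqrt (rseq n) / 4) ≤ ({z : V | G.dist x z ≤ rseq n}.ncard : ℝ)) :
    ∀ ε : ℝ, 0 < ε → ∃ R : ℕ, ∀ x : V, ∀ r : ℕ, R ≤ r →
      (r : ℝ) < ε * ({z : V | G.dist x z ≤ r}.ncard : ℝ) := by
  have : Infinite V := hconn.infinite_of_two_rpow_sqrt_le_ncard hmono hlow
  intro ε hε
  obtain ⟨n, hn, hC⟩ := hmono.exists_mul_le_two_rpow_sqrt_div_four (6 / ε)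
  refine ⟨2 * rseq n, fun x r hr =>
    hconn.lt_mul_ncard_setOf_dist_le (fun y => Nat.ceil_le.mpr (hlow n y)) ?_ hr x⟩
  have hs : (1 : ℝ) ≤ rseq n := by exact_mod_cast hn
  rw [div_mul_eq_mul_div, div_le_iff₀' hε] at hC
  nlinarith [Nat.le_ceil ((2 : ℝ) ^ (√(rseq n) / 4))]

/-- If a connected graph with finite maximum degree satisfies the uniform lower growth
bound `β_x(r_n) ≥ 2^(√(r_n)/4)` along an increasing sequence `r_n`, then for every
`ε > 0` there is `R` with `ε * β_x(r) > r` for all `r ≥ R` and all `x`. -/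
theorem stmt_8 {V : Type*} (G : SimpleGraph V) (hconn : G.Connected)
    (hlf : G.LocallyFinite) (Δ : ℕ) (hdeg : ∀ v : V, G.degree v ≤ Δ)
    (rseq : ℕ → ℕ) (hmono : StrictMono rseq)
    (hlow : ∀ n : ℕ, ∀ x : V,
      (2 : ℝ) ^ (Real.sqrt (rseq n) / 4) ≤ ({z : V | G.dist x z ≤ rseq n}.ncard : ℝ)) :
    ∀ ε : ℝ, 0 < ε → ∃ R : ℕ, ∀ x : V, ∀ r : ℕ, R ≤ r →
      (r : ℝ) < ε * ({z : V | G.dist x z ≤ r}.ncard : ℝ) :=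
  stmt_8_general G hconn hlf rseq hmono hlow
end
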